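/- Let H be a real Hilbert space, L: H → H a bounded self-adjoint operator, A ⊆ H a finite-dimensional subspace, and c > 0. If ⟨Lh, h⟩ ≤ -c‖h‖² for all h ∈ A and ⟨Lh, h⟩ ≥ c‖h‖² for all h ∈ A⊥, then L is invertible and ‖L⁻¹‖ ≤ 1/c. -/

import Mathlib

open RealInnerProductSpace
theorem stmt_9 {H : Type*} [NormedAddCommGroup H] [InnerProductSpace ℝ H]
    [CompleteSpace H] (L : H →L[ℝ] H) (hL : IsSelfAdjoint L)
    (A : Submodule ℝ H) [FiniteDimensional ℝ A] (c : ℝ) (hc : 0 < c)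
    (hneg : ∀ h ∈ A, ⟪L h, h⟫ ≤ -c * ‖h‖ ^ 2)
    (hpos : ∀ h ∈ Aᗮ, c * ‖h‖ ^ 2 ≤ ⟪L h, h⟫) :
    ∃ Linv : H →L[ℝ] H, Linv.comp L = ContinuousLinearMap.id ℝ H ∧
      L.comp Linv = ContinuousLinearMap.id ℝ H ∧ ‖Linv‖ ≤ 1 / c := by
  have hsym : ∀ x y : H, ⟪L x, y⟫ = ⟪x, L y⟫ := fun x y =>
    (hL.isSymmetric) x y
  -- Key estimate : c ‖h‖ ≤ ‖L h‖
  have key : ∀ h : H, c * ‖h‖ ≤ ‖L h‖ := by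
    intro h
    rcases eq_or_ne h 0 with rfl | hh
    · simp
    set a : H := (A.orthogonalProjectionOnto h : H) with ha
    set b : H := h - a with hb
    have haA : a ∈ A := (A.orthogonalProjectionOnto h).2
    have hbA : b ∈ Aᗮ := A.sub_starProjection_mem_orthogonal h
    have hab : ⟪a, b⟫ = 0 := (Submodule.mem_orthogonal A b).1 hbA a haA
    have hba : ⟪b, a⟫ = 0 := by rwa [real_inner_comm]
    have hsum : a + b = h := by simp [hb]
    have hnorm : ‖h‖ ^ 2 = ‖a‖ ^ 2 + ‖b‖ ^ 2 := by
      rw [← hsum, ← real_inner_self_eq_norm_sq, inner_add_add_self, hab, hba,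
        real_inner_self_eq_norm_sq, real_inner_self_eq_norm_sq]
      ring
    have hnorm2 : ‖b - a‖ ^ 2 = ‖h‖ ^ 2 := by
      rw [← real_inner_self_eq_norm_sq, inner_sub_sub_self, hab, hba,
        real_inner_self_eq_norm_sq, real_inner_self_eq_norm_sq, hnorm]
      ring
    have hnormeq : ‖b - a‖ = ‖h‖ := by
      have h2 := congrArg Real.sqrt hnorm2
      rwa [Real.sqrt_sq (norm_nonneg _), Real.sqrt_sq (norm_nonneg _)] at h2
    have hcross : ⟪L a, b⟫ = ⟪L b, a⟫ := by
      rw [hsym a b, real_inner_comm]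
    have hLh : ⟪L h, b - a⟫ = ⟪L b, b⟫ - ⟪L a, a⟫ := by
      rw [← hsum]
      simp only [map_add, inner_add_left, inner_sub_right]
      rw [hcross]; ring
    have hlow : c * ‖h‖ ^ 2 ≤ ⟪L h, b - a⟫ := by
      rw [hLh, hnorm]
      have h1 := hneg a haA
      have h2 := hpos b hbA
      nlinarith
    have hcs : ⟪L h, b - a⟫ ≤ ‖L h‖ * ‖h‖ := by
      calc ⟪L h, b - a⟫ ≤ ‖L h‖ * ‖b - a‖ := real_inner_le_norm _ _
        _ = ‖L h‖ * ‖h‖ := by rw [hnormeq]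
    have hpos' : 0 < ‖h‖ := norm_pos_iff.mpr hh
    have : c * ‖h‖ * ‖h‖ ≤ ‖L h‖ * ‖h‖ := by nlinarith
    exact le_of_mul_le_mul_right this hpos'
  have hinj : Function.Injective L := by
    intro x y hxy
    have : L (x - y) = 0 := by simp [map_sub, hxy]
    have h0 := key (x - y)
    rw [this, norm_zero] at h0
    have : ‖x - y‖ ≤ 0 := by nlinarith [norm_nonneg (x - y)]
    have : x - y = 0 := norm_le_zero_iff.mp this
    exact sub_eq_zero.mp this
  -- range is closed
  have hanti : AntilipschitzWith (⟨c, hc.le⟩ : NNReal)⁻¹ L := by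
    refine L.antilipschitz_of_bound fun x => ?_
    have h1 : ‖x‖ ≤ c⁻¹ * ‖L x‖ := by
      rw [inv_mul_eq_div, le_div_iff₀ hc]
      nlinarith [key x]
    show ‖x‖ ≤ ((⟨c, hc.le⟩ : NNReal)⁻¹ : ℝ) * ‖L x‖
    exact h1
  have hclosed : IsClosed (Set.range L) := hanti.isClosed_range L.uniformContinuous
  have hclosed' : IsClosed ((LinearMap.range (L : H →ₗ[ℝ] H) : Submodule ℝ H) : Set H) := by
    convert hclosed using 1
    exact LinearMap.coe_range (L : H →ₗ[ℝ] H)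
  haveI : CompleteSpace (LinearMap.range (L : H →ₗ[ℝ] H) : Submodule ℝ H) :=
    hclosed'.completeSpace_coe
  have hsurj : Function.Surjective L := by
    have horth : (LinearMap.range (L : H →ₗ[ℝ] H) : Submodule ℝ H)ᗮ = ⊥ := by
      rw [Submodule.eq_bot_iff]
      intro x hx
      have hLx : L x = 0 := by
        have hall : ∀ y : H, ⟪L x, y⟫ = 0 := by
          intro y
          rw [hsym, real_inner_comm]
          exact (Submodule.mem_orthogonal _ x).1 hx (L y) ⟨y, rfl⟩
        have := hall (L x)
        rwa [real_inner_self_eq_norm_sq, pow_eq_zero_iff (by norm_num),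
          norm_eq_zero] at this
      have h0 := key x
      rw [hLx, norm_zero] at h0
      have : ‖x‖ ≤ 0 := by nlinarith [norm_nonneg x]
      exact norm_le_zero_iff.mp this
    have : (LinearMap.range (L : H →ₗ[ℝ] H) : Submodule ℝ H) = ⊤ :=
      Submodule.orthogonal_eq_bot_iff.mp horth
    intro y
    have : y ∈ LinearMap.range (L : H →ₗ[ℝ] H) := this ▸ Submodule.mem_top
    exact this
  -- construct the inverse
  let e : H ≃ₗ[ℝ] H := LinearEquiv.ofBijective (L : H →ₗ[ℝ] H) ⟨hinj, hsurj⟩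
  have hbound : ∀ y : H, ‖e.symm y‖ ≤ (1 / c) * ‖y‖ := by
    intro y
    have h1 : L (e.symm y) = y := e.apply_symm_apply y
    have h2 := key (e.symm y)
    rw [h1] at h2
    rw [div_mul_eq_mul_div, le_div_iff₀ hc]
    linarith
  refine ⟨LinearMap.mkContinuous (e.symm : H →ₗ[ℝ] H) (1 / c) hbound, ?_, ?_, ?_⟩
  · ext x
    simp only [ContinuousLinearMap.coe_comp', Function.comp_apply,
      ContinuousLinearMap.coe_id', id_eq, LinearMap.mkContinuous_apply]
    exact e.symm_apply_apply x
  · ext x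
    simp only [ContinuousLinearMap.coe_comp', Function.comp_apply,
      ContinuousLinearMap.coe_id', id_eq, LinearMap.mkContinuous_apply]
    exact e.apply_symm_apply x
  · exact LinearMap.mkContinuous_norm_le _ (by positivity) _
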